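/- For every hypothesis class H with 1 < w(H) < ∞, every time horizon T ≥ 2 and realizability parameter k, the deterministic apple tasting mistake bound satisfies M*(H, T, k) = O(√(T·(k + L(H)·log T))). -/

import Mathlib

/-- Littlestone shattering of a perfect binary mistake tree of depth `d`. -/
inductive Shatters {X : Type*} : Set (X → Bool) → ℕ → Prop
  | zero (H : Set (X → Bool)) (hne : H.Nonempty) : Shatters H 0
  | succ (H : Set (X → Bool)) (d : ℕ) (x : X)
      (h0 : Shatters {h ∈ H | h x = false} d)
      (h1 : Shatters {h ∈ H | h x = true} d) : Shatters H (d + 1)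

/-- `W1Shatters H d` : `H` shatters a width-1 tree of depth `d` (a perfect binary tree
truncated below the first right edge of each branch): at each node some `h ∈ H` realizes
the branch ending with the right edge, and the `x → 0` restriction shatters the left
subtree. -/
inductive W1Shatters {X : Type*} : Set (X → Bool) → ℕ → Prop
  | zero (H : Set (X → Bool)) (hne : H.Nonempty) : W1Shatters H 0
  | succ (H : Set (X → Bool)) (d : ℕ) (x : X)
      (hr : ∃ h ∈ H, h x = true)
      (hl : W1Shatters {h ∈ H | h x = false} d) : W1Shatters H (d + 1)

/-- A deterministic apple tasting learner for a hypothesis class: it maps the feedback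
history (instances together with the revealed label when the learner predicted `1`)
and the current instance to a prediction. -/
def ConceptLearner (X : Type) : Type := List (X × Option Bool) → X → Bool

/-- The feedback history produced by running learner `Lrn` on instances `x` and true
labels `y` under apple tasting feedback. -/
def histC (X : Type) (Lrn : ConceptLearner X) (x : ℕ → X) (y : ℕ → Bool) :
    ℕ → List (X × Option Bool)
  | 0 => []
  | t + 1 =>
      histC X Lrn x y t ++
        [(x t, if Lrn (histC X Lrn x y t) (x t) = true then some (y t) else none)]

/-- The learner's prediction in round `t`. -/
def predC (X : Type) (Lrn : ConceptLearner X) (x : ℕ → X) (y : ℕ → Bool) (t : ℕ) : Bool :=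
  Lrn (histC X Lrn x y t) (x t)

/-- The number of mistakes made by the learner during the first `T` rounds. -/
def mistakesC (X : Type) (Lrn : ConceptLearner X) (x : ℕ → X) (y : ℕ → Bool) (T : ℕ) : ℕ :=
  ((Finset.range T).filter (fun t => predC X Lrn x y t ≠ y t)).card

/-!
A class of finite Littlestone dimension `ℓ` is covered by few experts: the Standard Optimal
Algorithm errs at most `ℓ` times on any `h ∈ H`, so `h` is reproduced on the first `T` rounds by
the expert that runs the SOA on its own advice and flips its prediction at a set of at most `ℓ`
rounds. There are at most `T ^ (2ℓ)` such sets.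

Against these experts we run `ExpAT`: exponential weights that, on rounds without feedback
(prediction `0`), impute the label `1` at the reduced rate `θ`, and that predict `1` once the
experts advising `1` carry a `θ`-fraction of the weight. Fix an expert `b` with at most `k`
errors. The potential `log (total weight) + (loss of b)` starts at `log n` and stays
nonnegative; a round raises it by at most `2θ²`, plus `1` if `b` errs, and a mistake on which
`b` is right lowers it by `θ / 3`. Hence at most `k + 3 (log n + k) / θ + 6 T θ` mistakes, and
`θ ≈ √((k + log n) / T)` gives `O(√(T (k + ℓ log T)))`.
-/

open Finset Real

namespace Shatters

variable {X : Type*} {H V : Set (X → Bool)} {d e : ℕ}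

protected theorem nonempty (h : Shatters H d) : H.Nonempty := by
  induction h with
  | zero H hne => exact hne
  | succ _ _ _ _ _ ih0 _ => exact ih0.mono fun _ hg => hg.1

protected theorem mono (hVH : V ⊆ H) (h : Shatters V d) : Shatters H d := by
  induction h generalizing H with
  | zero V hne => exact .zero _ (hne.mono hVH)
  | succ V d x _ _ ih0 ih1 =>
    exact .succ _ d x (ih0 fun g hg => ⟨hVH hg.1, hg.2⟩) (ih1 fun g hg => ⟨hVH hg.1, hg.2⟩)

protected theorem of_succ : ∀ {H : Set (X → Bool)}, Shatters H (d + 1) → Shatters H d := by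
  induction d with
  | zero =>
    intro H h
    cases h with
    | succ _ _ x h0 _ => exact .zero _ (h0.nonempty.mono fun _ hg => hg.1)
  | succ d ih =>
    intro H h
    cases h with
    | succ _ _ x h0 h1 => exact .succ _ _ x (ih h0) (ih h1)

protected theorem of_le (h : Shatters H d) (hed : e ≤ d) : Shatters H e := by
  induction d, hed using Nat.le_induction with
  | base => exact h
  | succ d _ ih => exact ih h.of_succ

theorem succ_of_restrict {x : X} (b : Bool) (hb : Shatters {h ∈ H | h x = b} d)
    (hnb : Shatters {h ∈ H | h x = !b} d) : Shatters H (d + 1) := by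
  cases b
  · exact .succ H d x hb hnb
  · exact .succ H d x hnb hb

end Shatters

theorem W1Shatters.shatters_one {X : Type*} {H : Set (X → Bool)} (h : W1Shatters H 1) :
    Shatters H 1 := by
  cases h with
  | succ _ _ x hr hl =>
    obtain ⟨g, hgH, hgx⟩ := hr
    cases hl with
    | zero _ hne => exact .succ H 0 x (.zero _ hne) (.zero _ ⟨g, hgH, hgx⟩)

namespace AppleTasting

section LittlestoneDim

variable {X : Type*} {H V W : Set (X → Bool)} {m : ℕ}

noncomputable def littlestoneDim (V : Set (X → Bool)) : ℕ := sSup {m | Shatters V m}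

theorem bddAbove_shatters_of_subset (hH : BddAbove {m | Shatters H m}) (hVH : V ⊆ H) :
    BddAbove {m | Shatters V m} :=
  hH.mono fun _ hm => hm.mono hVH

theorem le_littlestoneDim (hV : BddAbove {m | Shatters V m}) (h : Shatters V m) :
    m ≤ littlestoneDim V :=
  le_csSup hV h

theorem shatters_littlestoneDim (hV : BddAbove {m | Shatters V m}) (hne : V.Nonempty) :
    Shatters V (littlestoneDim V) :=
  Nat.sSup_mem ⟨0, .zero V hne⟩ hV

theorem littlestoneDim_mono (hW : BddAbove {m | Shatters W m}) (hVW : V ⊆ W) :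
    littlestoneDim V ≤ littlestoneDim W :=
  csSup_le_csSup' hW fun _ hm => hm.mono hVW

open Classical in
/-- The Standard Optimal Algorithm predicts the label whose restriction of `V` has the larger
Littlestone dimension; comparing through `Shatters` makes an empty restriction lose. -/
noncomputable def soaPred (V : Set (X → Bool)) (x : X) : Bool :=
  decide (Shatters {h ∈ V | h x = true} (littlestoneDim {h ∈ V | h x = false}))

theorem littlestoneDim_lt_of_soaPred_ne (hV : BddAbove {m | Shatters V m}) {h : X → Bool}
    (hh : h ∈ V) {x : X} (hne : soaPred V x ≠ h x) :
    littlestoneDim {g ∈ V | g x = h x} < littlestoneDim V := by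
  have hbdd : ∀ b, BddAbove {m | Shatters {g ∈ V | g x = b} m} := fun _ =>
    bddAbove_shatters_of_subset hV fun _ hg => hg.1
  have hself : Shatters {g ∈ V | g x = h x} (littlestoneDim {g ∈ V | g x = h x}) :=
    shatters_littlestoneDim (hbdd _) ⟨h, hh, rfl⟩
  suffices hother : Shatters {g ∈ V | g x = !h x} (littlestoneDim {g ∈ V | g x = h x}) from
    le_littlestoneDim hV (.succ_of_restrict (h x) hself hother)
  cases hb : h x <;> simp only [hb, soaPred, ne_eq, decide_eq_true_eq, decide_eq_false_iff_not,
    Bool.not_true, Bool.not_false, not_not] at hne hself ⊢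
  · exact hne
  · have hlt : littlestoneDim {g ∈ V | g x = true} < littlestoneDim {g ∈ V | g x = false} :=
      lt_of_not_ge fun hle => hne (hself.of_le hle)
    obtain ⟨m, hm, hltm⟩ := exists_lt_of_lt_csSup' hlt
    exact Shatters.of_le hm hltm.le

end LittlestoneDim

def smallSubsets {α : Type*} (s : Finset α) (ℓ : ℕ) : Finset (Finset α) :=
  {B ∈ s.powerset | #B ≤ ℓ}

theorem card_smallSubsets_le {α : Type*} [DecidableEq α] {s : Finset α} (hs : 2 ≤ #s) (ℓ : ℕ) :
    #(smallSubsets s ℓ) ≤ #s ^ (2 * ℓ) := by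
  have hsub : smallSubsets s ℓ ⊆ (range (ℓ + 1)).biUnion (fun i => powersetCard i s) := by
    intro B hB
    simp only [smallSubsets, mem_filter, mem_powerset] at hB
    exact mem_biUnion.2 ⟨#B, mem_range.2 (by omega), mem_powersetCard.2 ⟨hB.1, rfl⟩⟩
  calc #(smallSubsets s ℓ) ≤ ∑ i ∈ range (ℓ + 1), #(powersetCard i s) :=
        (card_le_card hsub).trans card_biUnion_le
    _ ≤ ∑ _i ∈ range (ℓ + 1), #s ^ ℓ := by
        refine sum_le_sum fun i hi => ?_
        rw [card_powersetCard]
        exact (Nat.choose_le_pow _ _).trans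
          (Nat.pow_le_pow_right (by omega) (by simpa [Nat.lt_succ_iff] using hi))
    _ = (ℓ + 1) * #s ^ ℓ := by simp
    _ ≤ #s ^ ℓ * #s ^ ℓ :=
        Nat.mul_le_mul_right _ ((Nat.lt_two_pow_self).trans_le (Nat.pow_le_pow_left hs ℓ))
    _ = #s ^ (2 * ℓ) := by ring

theorem log_card_smallSubsets_range_le {T : ℕ} (hT : 2 ≤ T) (ℓ : ℕ) :
    log #(smallSubsets (range T) ℓ) ≤ 2 * ℓ * log T := by
  have hpos : 0 < #(smallSubsets (range T) ℓ) :=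
    card_pos.2 ⟨∅, by simp [smallSubsets]⟩
  have hle := card_smallSubsets_le (s := range T) (by simpa using hT) ℓ
  rw [card_range] at hle
  calc log #(smallSubsets (range T) ℓ) ≤ log ((T : ℝ) ^ (2 * ℓ)) :=
        log_le_log (by exact_mod_cast hpos) (by exact_mod_cast hle)
    _ = 2 * ℓ * log T := by rw [log_pow]; push_cast; ring

section Experts

variable {X : Type*} {H : Set (X → Bool)}

def versionSpace (H : Set (X → Bool)) (x : ℕ → X) (lab : ℕ → Bool) : ℕ → Set (X → Bool)
  | 0 => H
  | t + 1 => {h ∈ versionSpace H x lab t | h (x t) = lab t}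

theorem versionSpace_subset (x : ℕ → X) (lab : ℕ → Bool) : ∀ t, versionSpace H x lab t ⊆ H
  | 0 => subset_rfl
  | t + 1 => fun _ hg => versionSpace_subset x lab t hg.1

theorem mem_versionSpace {h : X → Bool} (hh : h ∈ H) (x : ℕ → X) :
    ∀ t, h ∈ versionSpace H x (fun s => h (x s)) t
  | 0 => hh
  | t + 1 => ⟨mem_versionSpace hh x t, rfl⟩

theorem card_soa_mistakes_le (hH : BddAbove {m | Shatters H m}) {h : X → Bool} (hh : h ∈ H)
    (x : ℕ → X) (T : ℕ) :
    #{t ∈ range T | soaPred (versionSpace H x (fun s => h (x s)) t) (x t) ≠ h (x t)}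
      ≤ littlestoneDim H := by
  set V := versionSpace H x (fun s => h (x s))
  have hV : ∀ t, BddAbove {m | Shatters (V t) m} := fun t =>
    bddAbove_shatters_of_subset hH (versionSpace_subset x _ t)
  suffices ∀ T, #{t ∈ range T | soaPred (V t) (x t) ≠ h (x t)} + littlestoneDim (V T)
      ≤ littlestoneDim H from (this T).trans' (Nat.le_add_right _ _)
  intro T
  induction T with
  | zero => simp [V, versionSpace]
  | succ T ih =>
    rw [range_add_one, filter_insert]
    have hmono : littlestoneDim (V (T + 1)) ≤ littlestoneDim (V T) :=
      littlestoneDim_mono (hV T) fun _ hg => hg.1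
    split_ifs with hmis
    · have hlt : littlestoneDim (V (T + 1)) < littlestoneDim (V T) :=
        littlestoneDim_lt_of_soaPred_ne (hV T) (mem_versionSpace hh x T) hmis
      rw [card_insert_of_notMem (by simp)]
      omega
    · omega

/-- The version space of the expert that runs the SOA on its own advice, flipping its prediction
at the rounds in `B`. -/
noncomputable def flipVersionSpace (H : Set (X → Bool)) (B : Finset ℕ) (x : ℕ → X) :
    ℕ → Set (X → Bool)
  | 0 => H
  | t + 1 => {h ∈ flipVersionSpace H B x t | h (x t) =
      if t ∈ B then !soaPred (flipVersionSpace H B x t) (x t)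
      else soaPred (flipVersionSpace H B x t) (x t)}

noncomputable def flipAdvice (H : Set (X → Bool)) (B : Finset ℕ) (x : ℕ → X) (t : ℕ) : Bool :=
  if t ∈ B then !soaPred (flipVersionSpace H B x t) (x t)
  else soaPred (flipVersionSpace H B x t) (x t)

theorem flipVersionSpace_succ (B : Finset ℕ) (x : ℕ → X) (t : ℕ) :
    flipVersionSpace H B x (t + 1) =
      {h ∈ flipVersionSpace H B x t | h (x t) = flipAdvice H B x t} :=
  rfl

theorem flipVersionSpace_congr (B : Finset ℕ) {x x' : ℕ → X} :
    ∀ t, (∀ s < t, x s = x' s) → flipVersionSpace H B x t = flipVersionSpace H B x' t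
  | 0, _ => rfl
  | t + 1, hxx' => by
    have ih := flipVersionSpace_congr B t fun s hs => hxx' s (Nat.lt_succ_of_lt hs)
    simp only [flipVersionSpace_succ, flipAdvice, ih, hxx' t (Nat.lt_succ_self t)]

theorem flipAdvice_congr (B : Finset ℕ) {x x' : ℕ → X} (t : ℕ) (hxx' : ∀ s ≤ t, x s = x' s) :
    flipAdvice H B x t = flipAdvice H B x' t := by
  simp only [flipAdvice, hxx' t le_rfl,
    flipVersionSpace_congr B t fun s hs => hxx' s hs.le]

/-- `B` is the set of rounds where the SOA, run on the labels of `h`, errs. -/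
theorem exists_flipAdvice_eq (hH : BddAbove {m | Shatters H m}) {h : X → Bool} (hh : h ∈ H)
    (x : ℕ → X) (T : ℕ) :
    ∃ B ∈ smallSubsets (range T) (littlestoneDim H), ∀ t < T, flipAdvice H B x t = h (x t) := by
  set V := versionSpace H x (fun s => h (x s))
  set B := {t ∈ range T | soaPred (V t) (x t) ≠ h (x t)}
  have hflip : ∀ t < T,
      (if t ∈ B then !soaPred (V t) (x t) else soaPred (V t) (x t)) = h (x t) := by
    intro t ht
    cases hs : soaPred (V t) (x t) <;> cases hx : h (x t) <;> simp [B, ht, hs, hx]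
  have hVS : ∀ t ≤ T, flipVersionSpace H B x t = V t := by
    intro t
    induction t with
    | zero => intro; rfl
    | succ t ih =>
      intro ht
      rw [flipVersionSpace_succ, flipAdvice, ih (by omega), hflip t ht]
      rfl
  refine ⟨B, mem_filter.2 ⟨mem_powerset.2 (filter_subset _ _), card_soa_mistakes_le hH hh x T⟩,
    fun t ht => ?_⟩
  rw [flipAdvice, hVS t ht.le, hflip t ht]

end Experts

section ExpAT

variable {ι : Type*} {J : Finset ι} {θ : ℝ}

/-- Loss of an expert advising `a` when the learner receives feedback `fb`; without feedback
(`none`, the learner predicted `0`) the label is imputed as `1` and the loss scaled by `θ`. -/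
def atLoss (θ : ℝ) (a : Bool) : Option Bool → ℝ
  | some y => if a = y then 0 else 1
  | none => if a then 0 else θ

def appleFeedback (p y : Bool) : Option Bool := if p then some y else none

noncomputable def expATWeight (θ : ℝ) (a : ℕ → Bool) (fb : ℕ → Option Bool) (t : ℕ) : ℝ :=
  exp (-∑ s ∈ range t, atLoss θ (a s) (fb s))

noncomputable def expATPredict (θ : ℝ) (J : Finset ι) (w : ι → ℝ) (adv : ι → Bool) : Bool :=
  decide (θ * ∑ i ∈ J, w i ≤ ∑ i ∈ J with adv i, w i)

theorem atLoss_nonneg (hθ : 0 ≤ θ) (a : Bool) (fb : Option Bool) : 0 ≤ atLoss θ a fb := by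
  cases fb <;> simp only [atLoss] <;> split_ifs <;> norm_num [hθ]

theorem expATWeight_succ (a : ℕ → Bool) (fb : ℕ → Option Bool) (t : ℕ) :
    expATWeight θ a fb (t + 1) = expATWeight θ a fb t * exp (-atLoss θ (a t) (fb t)) := by
  rw [expATWeight, expATWeight, sum_range_succ, neg_add, exp_add]

theorem sum_mul_ite_eq_sub (J : Finset ι) (w : ι → ℝ) (p : ι → Prop) [DecidablePred p]
    (c : ℝ) :
    ∑ i ∈ J, w i * (if p i then c else 1)
      = ∑ i ∈ J, w i - (1 - c) * ∑ i ∈ J with p i, w i := by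
  rw [sum_filter, mul_sum, ← sum_sub_distrib]
  refine sum_congr rfl fun i _ => ?_
  split_ifs <;> ring

theorem le_log_sub_log_of_le_mul {a b c : ℝ} (ha : 0 < a) (hb : 0 < b) (h : b ≤ (1 - c) * a) :
    c ≤ log a - log b := by
  have hlog := log_le_sub_one_of_pos (div_pos hb ha)
  rw [log_div hb.ne' ha.ne', div_sub_one ha.ne'] at hlog
  have : (b - a) / a ≤ -c := by rw [div_le_iff₀ ha]; linarith
  linarith

theorem div_one_add_le_one_sub_exp_neg (hθ : 0 ≤ θ) : θ / (1 + θ) ≤ 1 - exp (-θ) := by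
  have hexp : exp (-θ) ≤ (1 + θ)⁻¹ := by
    rw [exp_neg]; exact inv_anti₀ (by positivity) (by linarith [add_one_le_exp θ])
  have : θ / (1 + θ) = 1 - (1 + θ)⁻¹ := by field_simp; ring
  linarith

theorem sum_mul_exp_neg_atLoss_le (hθ : 0 ≤ θ) {w : ι → ℝ} (hw : ∀ i ∈ J, 0 ≤ w i)
    (adv : ι → Bool) (fb : Option Bool) :
    ∑ i ∈ J, w i * exp (-atLoss θ (adv i) fb) ≤ ∑ i ∈ J, w i :=
  sum_le_sum fun i hi => mul_le_of_le_one_right (hw i hi)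
    (exp_le_one_iff.2 (neg_nonpos.2 (atLoss_nonneg hθ _ _)))

/-- After a false positive the experts advising `1`, at least a `θ`-fraction of the weight,
lose a factor `e⁻¹`. -/
theorem sum_mul_exp_neg_atLoss_some_false_le {w : ι → ℝ} (hw : ∀ i ∈ J, 0 ≤ w i)
    {adv : ι → Bool} (hpred : θ * ∑ i ∈ J, w i ≤ ∑ i ∈ J with adv i, w i) :
    ∑ i ∈ J, w i * exp (-atLoss θ (adv i) (some false)) ≤ (1 - θ / 2) * ∑ i ∈ J, w i := by
  have hfac : ∀ i, exp (-atLoss θ (adv i) (some false)) = if adv i then exp (-1) else 1 := by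
    intro i; cases adv i <;> simp [atLoss]
  have he : exp (-1 : ℝ) ≤ 1 / 2 := by
    rw [exp_neg, inv_le_comm₀ (exp_pos 1) (by norm_num)]
    linarith [exp_one_gt_d9]
  have hW1 : 0 ≤ ∑ i ∈ J with adv i, w i := sum_nonneg fun i hi => hw i (mem_filter.1 hi).1
  simp only [hfac, sum_mul_ite_eq_sub]
  nlinarith

/-- When the learner predicts `0`, the experts advising `0`, more than a `(1 - θ)`-fraction of
the weight, lose a factor `e^{-θ}`. -/
theorem sum_mul_exp_neg_atLoss_none_le (hθ : 0 ≤ θ) {w : ι → ℝ} (hw : ∀ i ∈ J, 0 ≤ w i)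
    {adv : ι → Bool} (hpred : ¬ θ * ∑ i ∈ J, w i ≤ ∑ i ∈ J with adv i, w i) :
    ∑ i ∈ J, w i * exp (-atLoss θ (adv i) none)
      ≤ (1 - θ * (1 - θ) / (1 + θ)) * ∑ i ∈ J, w i := by
  have hfac : ∀ i, exp (-atLoss θ (adv i) none) = if adv i = false then exp (-θ) else 1 := by
    intro i; cases adv i <;> simp [atLoss]
  have hsplit := sum_filter_add_sum_filter_not J (fun i => adv i = true) w
  simp only [Bool.not_eq_true] at hsplit
  have hW0 : (1 - θ) * ∑ i ∈ J, w i ≤ ∑ i ∈ J with adv i = false, w i := by linarith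
  have hW0pos : 0 ≤ ∑ i ∈ J with adv i = false, w i :=
    sum_nonneg fun i hi => hw i (mem_filter.1 hi).1
  have hlost : θ * (1 - θ) / (1 + θ) * ∑ i ∈ J, w i
      ≤ (1 - exp (-θ)) * ∑ i ∈ J with adv i = false, w i :=
    calc θ * (1 - θ) / (1 + θ) * ∑ i ∈ J, w i
        = θ / (1 + θ) * ((1 - θ) * ∑ i ∈ J, w i) := by ring
      _ ≤ θ / (1 + θ) * ∑ i ∈ J with adv i = false, w i := by gcongr
      _ ≤ (1 - exp (-θ)) * ∑ i ∈ J with adv i = false, w i := by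
        gcongr; exact div_one_add_le_one_sub_exp_neg hθ
  simp only [hfac, sum_mul_ite_eq_sub]
  linarith

theorem expAT_round_gain (hθ0 : 0 < θ) (hθ : θ ≤ 1 / 2) {w : ι → ℝ} (hw : ∀ i ∈ J, 0 < w i)
    {b : ι} (hb : b ∈ J) (adv : ι → Bool) (yt : Bool) :
    θ / 3 * (if expATPredict θ J w adv ≠ yt ∧ adv b = yt then 1 else 0)
        - (if adv b ≠ yt then 1 else 0) - 2 * θ ^ 2
      ≤ log (∑ i ∈ J, w i)
        - log (∑ i ∈ J, w i * exp (-atLoss θ (adv i) (appleFeedback (expATPredict θ J w adv) yt)))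
        - atLoss θ (adv b) (appleFeedback (expATPredict θ J w adv) yt) := by
  have hw0 : ∀ i ∈ J, 0 ≤ w i := fun i hi => (hw i hi).le
  have hW : 0 < ∑ i ∈ J, w i := sum_pos hw ⟨b, hb⟩
  have hW' : ∀ fb, 0 < ∑ i ∈ J, w i * exp (-atLoss θ (adv i) fb) :=
    fun fb => sum_pos (fun i hi => mul_pos (hw i hi) (exp_pos _)) ⟨b, hb⟩
  have hdrop : ∀ fb,
      0 ≤ log (∑ i ∈ J, w i) - log (∑ i ∈ J, w i * exp (-atLoss θ (adv i) fb)) := fun fb =>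
    sub_nonneg.2 (log_le_log (hW' fb) (sum_mul_exp_neg_atLoss_le hθ0.le hw0 adv fb))
  cases hp : expATPredict θ J w adv
  · have hpred : ¬ θ * ∑ i ∈ J, w i ≤ ∑ i ∈ J with adv i, w i := by
      simpa [expATPredict] using hp
    have hδ := le_log_sub_log_of_le_mul hW (hW' none)
      (sum_mul_exp_neg_atLoss_none_le hθ0.le hw0 hpred)
    have hthird : θ / 3 ≤ θ * (1 - θ) / (1 + θ) := by
      rw [le_div_iff₀ (by linarith)]; nlinarith
    have hleak : θ - 2 * θ ^ 2 ≤ θ * (1 - θ) / (1 + θ) := by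
      rw [le_div_iff₀ (by linarith)]; nlinarith
    simp only [appleFeedback, Bool.false_eq_true, if_false]
    generalize log (∑ i ∈ J, w i) - log (∑ i ∈ J, w i * exp (-atLoss θ (adv i) none))
      = D at hδ ⊢
    cases yt <;> cases adv b <;> simp [atLoss] <;> linarith
  · have hpred : θ * ∑ i ∈ J, w i ≤ ∑ i ∈ J with adv i, w i := by
      simpa [expATPredict] using hp
    simp only [appleFeedback, if_true]
    cases yt
    · have hfp := le_log_sub_log_of_le_mul hW (hW' (some false))
        (sum_mul_exp_neg_atLoss_some_false_le hw0 hpred)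
      generalize log (∑ i ∈ J, w i) - log (∑ i ∈ J, w i * exp (-atLoss θ (adv i) (some false)))
        = D at hfp ⊢
      cases adv b <;> simp [atLoss] <;> nlinarith
    · have h0 := hdrop (some true)
      generalize log (∑ i ∈ J, w i) - log (∑ i ∈ J, w i * exp (-atLoss θ (adv i) (some true)))
        = D at h0 ⊢
      cases adv b <;> simp [atLoss] <;> nlinarith

theorem expAT_mistakes_le (hθ0 : 0 < θ) (hθ : θ ≤ 1 / 2) {A : ι → ℕ → Bool} {y P : ℕ → Bool}
    (hP : ∀ t, P t = expATPredict θ J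
      (fun i => expATWeight θ (A i) (fun s => appleFeedback (P s) (y s)) t) (fun i => A i t))
    {b : ι} (hb : b ∈ J) {T k : ℕ} {L : ℝ} (hk : #{t ∈ range T | A b t ≠ y t} ≤ k)
    (hL : log #J ≤ L) :
    (#{t ∈ range T | P t ≠ y t} : ℝ) ≤ k + 3 * (L + k) / θ + 6 * T * θ := by
  set fb := fun s => appleFeedback (P s) (y s)
  set W := fun t => ∑ i ∈ J, expATWeight θ (A i) fb t
  set good := #{t ∈ range T | P t ≠ y t ∧ A b t = y t}
  set bad := #{t ∈ range T | A b t ≠ y t}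
  have hgain : ∀ t, θ / 3 * (if P t ≠ y t ∧ A b t = y t then 1 else 0)
      - (if A b t ≠ y t then 1 else 0) - 2 * θ ^ 2
      ≤ log (W t) - log (W (t + 1)) - atLoss θ (A b t) (fb t) := by
    intro t
    have := expAT_round_gain hθ0 hθ (w := fun i => expATWeight θ (A i) fb t)
      (fun i _ => exp_pos _) hb (fun i => A i t) (y t)
    rw [← hP t] at this
    simpa only [W, expATWeight_succ] using this
  -- the gains telescope; `W T` dominates the weight of `b`
  have hpot : ∑ t ∈ range T, (log (W t) - log (W (t + 1)) - atLoss θ (A b t) (fb t)) ≤ L := by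
    have hWT : log (expATWeight θ (A b) fb T) ≤ log (W T) :=
      log_le_log (exp_pos _) (single_le_sum (f := fun i => expATWeight θ (A i) fb T)
        (fun i _ => (exp_pos _).le) hb)
    rw [sum_sub_distrib, sum_range_sub' (fun t => log (W t))]
    simp only [W, expATWeight, log_exp, range_zero, sum_empty, neg_zero, exp_zero, sum_const,
      nsmul_eq_mul, mul_one] at hWT ⊢
    linarith
  have hcount : θ / 3 * good - bad - 2 * θ ^ 2 * T ≤ L := by
    refine le_trans (le_of_eq ?_) ((sum_le_sum fun t _ => hgain t).trans hpot)
    simp only [sum_sub_distrib, ← mul_sum, sum_boole, sum_const, card_range, nsmul_eq_mul, good,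
      bad]
    ring
  have hsplit : #{t ∈ range T | P t ≠ y t} ≤ good + bad := by
    refine (card_le_card fun t ht => ?_).trans (card_union_le _ _)
    simp only [mem_filter, mem_union] at ht ⊢
    tauto
  have hgood : good - 6 * T * θ ≤ 3 * (L + k) / θ := by
    rw [le_div_iff₀ hθ0]
    nlinarith [(Nat.cast_le (α := ℝ)).2 hk]
  have : (#{t ∈ range T | P t ≠ y t} : ℝ) ≤ good + bad := by exact_mod_cast hsplit
  linarith [(Nat.cast_le (α := ℝ)).2 hk]

end ExpAT

section Learner

variable {X : Type} {ι : Type*}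

/-- Instances are read back from the history, the current one standing at index
`hist.length`. -/
noncomputable def expAT (J : Finset ι) (E : ι → (ℕ → X) → ℕ → Bool) (θ : ℝ) : ConceptLearner X :=
  fun hist xcur =>
    let xs := fun s => (hist.map Prod.fst).getD s xcur
    expATPredict θ J
      (fun i => expATWeight θ (E i xs) (fun s => (hist.getD s (xcur, none)).2) hist.length)
      (fun i => E i xs hist.length)

theorem histC_eq_map (Lrn : ConceptLearner X) (x : ℕ → X) (y : ℕ → Bool) (t : ℕ) :
    histC X Lrn x y t =
      (List.range t).map fun s => (x s, appleFeedback (predC X Lrn x y s) (y s)) := by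
  induction t with
  | zero => rfl
  | succ t ih => rw [histC, List.range_succ, List.map_append, ← ih]; rfl

theorem expATWeight_congr {θ : ℝ} {a a' : ℕ → Bool} {fb fb' : ℕ → Option Bool} {t : ℕ}
    (ha : ∀ s < t, a s = a' s) (hfb : ∀ s < t, fb s = fb' s) :
    expATWeight θ a fb t = expATWeight θ a' fb' t := by
  unfold expATWeight
  congr 2
  exact sum_congr rfl fun s hs => by rw [ha s (mem_range.1 hs), hfb s (mem_range.1 hs)]

theorem predC_expAT (J : Finset ι) {E : ι → (ℕ → X) → ℕ → Bool}
    (hE : ∀ i x x' t, (∀ s ≤ t, x s = x' s) → E i x t = E i x' t) (θ : ℝ) (x : ℕ → X)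
    (y : ℕ → Bool) (t : ℕ) :
    predC X (expAT J E θ) x y t = expATPredict θ J
      (fun i => expATWeight θ (E i x)
        (fun s => appleFeedback (predC X (expAT J E θ) x y s) (y s)) t)
      (fun i => E i x t) := by
  set hist := histC X (expAT J E θ) x y t
  set xs := fun s => (hist.map Prod.fst).getD s (x t)
  have hlen : hist.length = t := by simp [hist, histC_eq_map]
  have hxs : ∀ s ≤ t, xs s = x s := by
    intro s hs
    rcases hs.lt_or_eq with hs | rfl
    · simp [xs, hist, histC_eq_map, hs]
    · simp [xs, hist, histC_eq_map]
  have hfb : ∀ s < t,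
      (hist.getD s (x t, none)).2 = appleFeedback (predC X (expAT J E θ) x y s) (y s) := by
    intro s hs
    simp [hist, histC_eq_map, hs]
  have hE' : ∀ i, ∀ s ≤ t, E i xs s = E i x s :=
    fun i s hs => hE i _ _ s fun u hu => hxs u (hu.trans hs)
  change expATPredict θ J (fun i => expATWeight θ (E i xs) (fun s => (hist.getD s (x t, none)).2)
    hist.length) (fun i => E i xs hist.length) = _
  rw [hlen]
  congr 1
  · funext i
    exact expATWeight_congr (fun s hs => hE' i s hs.le) hfb
  · funext i
    exact hE' i t le_rfl

end Learner

/-- The learning rate balancing the two terms of the `ExpAT` bound, capped at `1 / 2`. -/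
noncomputable def tunedRate (k L T : ℝ) : ℝ := min (1 / 2) √((k + L) / T)

theorem tunedRate_pos {k L T : ℝ} (hT : 0 < T) (hkL : 0 < k + L) : 0 < tunedRate k L T :=
  lt_min (by norm_num) (sqrt_pos.2 (div_pos hkL hT))

theorem tunedRate_le_half (k L T : ℝ) : tunedRate k L T ≤ 1 / 2 := min_le_left _ _

theorem le_mul_sqrt_of_le_tunedRate_bound {M k L T : ℝ} (hT : 0 < T) (hk : 0 ≤ k)
    (hL : 0 < L) (hMT : M ≤ T)
    (hM : M ≤ k + 3 * (L + k) / tunedRate k L T + 6 * T * tunedRate k L T) :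
    M ≤ 10 * √(T * (k + L)) := by
  set R := √(T * (k + L))
  by_cases hs : √((k + L) / T) ≤ 1 / 2
  · set s := √((k + L) / T)
    have hθ : tunedRate k L T = s := min_eq_right hs
    have hs0 : 0 < s := sqrt_pos.2 (div_pos (by linarith) hT)
    have hTs2 : T * s ^ 2 = k + L := by
      rw [sq_sqrt (by positivity), mul_div_cancel₀ _ hT.ne']
    have hRs : R = T * s := by
      rw [show R = √(T * (k + L)) from rfl, ← hTs2, show T * (T * s ^ 2) = (T * s) ^ 2 by ring,
        sqrt_sq (by positivity)]
    have hdiv : 3 * (L + k) / s = 3 * R := by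
      rw [div_eq_iff hs0.ne', hRs]
      linear_combination -3 * hTs2
    have hmin : min T k ≤ R :=
      le_sqrt_of_sq_le (by nlinarith [min_le_left T k, min_le_right T k, le_min hT.le hk, hL])
    rw [hθ, hdiv, mul_assoc, ← hRs] at hM
    have : M ≤ min T k + 9 * R := by
      rcases min_choice T k with h | h <;> rw [h] <;> linarith
    linarith
  · have hquarter : 1 / 4 < (k + L) / T := by
      have := (lt_sqrt (by norm_num)).1 (not_le.1 hs)
      linarith
    rw [lt_div_iff₀ hT] at hquarter
    have : T / 2 ≤ R := le_sqrt_of_sq_le (by nlinarith)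
    linarith [sqrt_nonneg (T * (k + L))]

end AppleTasting

open AppleTasting

/-- Upper bound for hard classes: there is a universal constant `C` such that for every
class `H` with `1 < w(H)` (i.e. `H` shatters width-1 trees of arbitrary depth) and finite
Littlestone dimension `ℓ` (which in particular gives `w(H) < ∞`), every horizon `T ≥ 2`
and every realizability parameter `k`, some deterministic apple tasting learner makes at
most `C·√(T(k + ℓ·log T))` mistakes on every `k`-realizable sequence of length `T`. -/
theorem hard_class_upper_bound :
    ∃ C : ℝ, 0 < C ∧
      ∀ (X : Type) (H : Set (X → Bool)) (ℓ : ℕ),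
        (∀ d : ℕ, W1Shatters H d) →
        IsGreatest {m : ℕ | Shatters H m} ℓ →
        ∀ T k : ℕ, 2 ≤ T →
          ∃ Lrn : ConceptLearner X, ∀ (x : ℕ → X) (y : ℕ → Bool),
            (∃ h ∈ H, ((Finset.range T).filter (fun t => h (x t) ≠ y t)).card ≤ k) →
            (mistakesC X Lrn x y T : ℝ) ≤
              C * Real.sqrt (T * (k + ℓ * Real.log T)) := by
  refine ⟨20, by norm_num, fun X H ℓ hW1 hG T k hT => ?_⟩
  have hℓ : 1 ≤ ℓ := hG.2 (hW1 1).shatters_one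
  have hlogT : 0 < log T := log_pos (by exact_mod_cast hT)
  set L := 2 * ℓ * log T
  have hL : 0 < L := by positivity
  set θ := tunedRate k L T
  set Lrn := expAT (smallSubsets (range T) ℓ) (flipAdvice H) θ
  refine ⟨Lrn, fun x y ⟨h, hh, hk⟩ => ?_⟩
  obtain ⟨B, hB, hBh⟩ := exists_flipAdvice_eq hG.bddAbove hh x T
  rw [show littlestoneDim H = ℓ from hG.csSup_eq] at hB
  have hBk : #{t ∈ range T | flipAdvice H B x t ≠ y t} ≤ k := by
    rwa [filter_congr fun t ht => by rw [hBh t (mem_range.1 ht)]]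
  have hM : (mistakesC X Lrn x y T : ℝ) ≤ _ :=
    expAT_mistakes_le (tunedRate_pos (by positivity) (by positivity))
    (tunedRate_le_half _ _ _) (predC_expAT _ (fun B _ _ t => flipAdvice_congr B t) θ x y) hB hBk
    (log_card_smallSubsets_range_le hT ℓ)
  have hMT : (mistakesC X Lrn x y T : ℝ) ≤ T := by
    exact_mod_cast (card_filter_le _ _).trans (card_range T).le
  have hsqrt : √(T * (k + L)) ≤ 2 * √(T * (k + ℓ * log T)) := by
    rw [sqrt_le_left (by positivity), mul_pow, sq_sqrt (by positivity)]
    nlinarith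
  linarith [le_mul_sqrt_of_le_tunedRate_bound (by positivity) k.cast_nonneg hL hMT hM]
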